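/- arXiv:1607.03533 — 5 statements merged into one kernel-verified Lean document; each statement's English description precedes it below -/
import Mathlib

section
/- A vector p* ∈ ℝ^n satisfying ‖P_par^T p*‖₂ ≤ δ and ‖P_perp^T p*‖₂ ≤ δ is a global solution of the trust-region subproblem: minimize Q(p) = g^T p + (1/2) p^T B p subject to ‖p‖_{P,2} ≤ δ, if and only if there exist unique σ_par ≥ 0 and σ_perp ≥ 0 such that (B + C_par) p* + g = 0, σ_par (‖P_par^T p*‖₂ − δ) = 0, σ_perp (‖P_perp^T p*‖₂ − δ) = 0, and the matrix B + C_par is positive semidefinite, where C_par = σ_perp I_n + (σ_par − σ_perp) P_par P_par^T. -/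
open Matrix

/-- The Euclidean (two-)norm of a vector in `ℝ^m`. -/
noncomputable def norm2 {m : ℕ} (x : Fin m → ℝ) : ℝ := Real.sqrt (∑ i, x i ^ 2)

/-!
In the coordinates `w₁ = P_parᵀ p`, `w₂ = P_perpᵀ p` both the objective and the `(P,2)`-ball
split, so `p*` is a global solution iff each block solves a trust-region subproblem over a
Euclidean ball. Each of those is characterized by the Moré–Sorensen conditions with a unique
multiplier, and `B + C_par` is `P_par (Λ + σ_par I) P_parᵀ + P_perp ((γ + σ_perp) I) P_perpᵀ`.

The Moré–Sorensen conditions rest on the identity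
`q w - q v = ((A + σ I) v + a) ⬝ (w - v) + ½ (w - v)ᵀ (A + σ I) (w - v) + ½ σ (‖v‖² - ‖w‖²)`:
it gives sufficiency at once, and for necessity on the boundary the multiplier comes from
first-order conditions along inward directions, while curvature is tested along chords
`v + t d` of the sphere, which are dense among all directions.
-/

open Filter Topology

section QuadraticModel

variable {ι : Type*} [Fintype ι] {A : Matrix ι ι ℝ} {a u v d : ι → ℝ} {δ : ℝ}

noncomputable def quadraticModel (A : Matrix ι ι ℝ) (a w : ι → ℝ) : ℝ :=
  a ⬝ᵥ w + (1 / 2) * (w ⬝ᵥ A *ᵥ w)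

lemma dotProduct_self_nonneg (v : ι → ℝ) : 0 ≤ v ⬝ᵥ v := by
  simpa using dotProduct_star_self_nonneg v

lemma dotProduct_self_pos (hv : v ≠ 0) : 0 < v ⬝ᵥ v := by
  simpa using dotProduct_star_self_pos_iff.mpr hv

lemma nonneg_of_eventually_nonneg {f : ℝ → ℝ} (hf : ContinuousAt f 0)
    (h : ∀ᶠ t : ℝ in 𝓝[>] 0, 0 ≤ f t) : 0 ≤ f 0 :=
  ge_of_tendsto (hf.tendsto.mono_left nhdsWithin_le_nhds) h

lemma quadraticModel_add (hA : A.IsSymm) (a v h : ι → ℝ) :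
    quadraticModel A a (v + h) =
      quadraticModel A a v + (A *ᵥ v + a) ⬝ᵥ h + 1 / 2 * (h ⬝ᵥ A *ᵥ h) := by
  have hsymm : v ⬝ᵥ A *ᵥ h = (A *ᵥ v) ⬝ᵥ h := by
    rw [dotProduct_mulVec, ← mulVec_transpose, hA.eq]
  simp only [quadraticModel, mulVec_add, dotProduct_add, add_dotProduct, hsymm,
    dotProduct_comm h (A *ᵥ v), dotProduct_comm a h]
  ring

lemma quadraticModel_add_smul (hA : A.IsSymm) (a v d : ι → ℝ) (t : ℝ) :
    quadraticModel A a (v + t • d) =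
      quadraticModel A a v + t * ((A *ᵥ v + a) ⬝ᵥ d + t / 2 * (d ⬝ᵥ A *ᵥ d)) := by
  rw [quadraticModel_add hA]
  simp only [mulVec_smul, dotProduct_smul, smul_dotProduct, smul_eq_mul]
  ring

lemma dotProduct_add_smul_self (v d : ι → ℝ) (t : ℝ) :
    (v + t • d) ⬝ᵥ (v + t • d) = v ⬝ᵥ v + t * (2 * (v ⬝ᵥ d) + t * (d ⬝ᵥ d)) := by
  simp only [dotProduct_add, add_dotProduct, dotProduct_smul, smul_dotProduct, smul_eq_mul,
    dotProduct_comm d v]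
  ring

lemma eventually_add_smul_mem_of_lt (hv : v ⬝ᵥ v < δ ^ 2) (d : ι → ℝ) :
    ∀ᶠ t : ℝ in 𝓝[>] 0, v + t • d ∈ {w | w ⬝ᵥ w ≤ δ ^ 2} := by
  have hcont : Continuous fun t : ℝ => (v + t • d) ⬝ᵥ (v + t • d) := by fun_prop
  have := (hcont.tendsto 0).eventually_lt_const (by simpa using hv)
  exact (this.filter_mono nhdsWithin_le_nhds).mono fun t ht => ht.le

lemma eventually_add_smul_mem_of_dotProduct_neg (hv : v ⬝ᵥ v ≤ δ ^ 2) (hd : v ⬝ᵥ d < 0) :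
    ∀ᶠ t : ℝ in 𝓝[>] 0, v + t • d ∈ {w | w ⬝ᵥ w ≤ δ ^ 2} := by
  have hcont : Continuous fun t : ℝ => 2 * (v ⬝ᵥ d) + t * (d ⬝ᵥ d) := by fun_prop
  have := (hcont.tendsto 0).eventually_lt_const (u := 0) (by simp; linarith)
  filter_upwards [this.filter_mono nhdsWithin_le_nhds, self_mem_nhdsWithin]
    with t ht (htpos : 0 < t)
  rw [dotProduct_add_smul_self]
  nlinarith

lemma dotProduct_nonneg_of_isMinOn (hA : A.IsSymm) {s : Set (ι → ℝ)}
    (hmin : IsMinOn (quadraticModel A a) s v) (hd : ∀ᶠ t : ℝ in 𝓝[>] 0, v + t • d ∈ s) :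
    0 ≤ (A *ᵥ v + a) ⬝ᵥ d := by
  have := nonneg_of_eventually_nonneg
    (f := fun t => (A *ᵥ v + a) ⬝ᵥ d + t / 2 * (d ⬝ᵥ A *ᵥ d)) (by fun_prop) ?_
  · simpa using this
  filter_upwards [hd, self_mem_nhdsWithin] with t ht (htpos : 0 < t)
  have hle := isMinOn_iff.mp hmin _ ht
  rw [quadraticModel_add_smul hA] at hle
  exact nonneg_of_mul_nonneg_right (by linarith) htpos

lemma exists_nonneg_add_smul_eq_zero (hv : v ≠ 0) (h : ∀ d, v ⬝ᵥ d < 0 → 0 ≤ u ⬝ᵥ d) :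
    ∃ σ : ℝ, 0 ≤ σ ∧ u + σ • v = 0 := by
  have hvv : 0 < v ⬝ᵥ v := dotProduct_self_pos hv
  set σ := -(u ⬝ᵥ v) / (v ⬝ᵥ v) with hσ
  have hσv : σ * (v ⬝ᵥ v) = -(u ⬝ᵥ v) := by rw [hσ]; field_simp
  refine ⟨σ, div_nonneg ?_ hvv.le, ?_⟩
  · simpa [dotProduct_comm v] using h (-v) (by simpa using hvv)
  set r := u + σ • v
  have hrv : v ⬝ᵥ r = 0 := by
    simp only [r, dotProduct_add, dotProduct_smul, smul_eq_mul, dotProduct_comm v u]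
    linarith
  -- `-r - s • v` points strictly into the half-space `v ⬝ᵥ d < 0` and tends to `-r`.
  have hrr := nonneg_of_eventually_nonneg
    (f := fun s => s * σ * (v ⬝ᵥ v) - r ⬝ᵥ r) (by fun_prop) ?_
  · simp only [zero_mul, zero_sub, Left.nonneg_neg_iff] at hrr
    exact dotProduct_self_eq_zero.mp (le_antisymm hrr (dotProduct_self_nonneg r))
  filter_upwards [self_mem_nhdsWithin] with s (hs : 0 < s)
  have hd := h (-r - s • v) (by
    simp only [dotProduct_sub, dotProduct_neg, dotProduct_smul, smul_eq_mul, hrv]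
    nlinarith)
  have hur : u = r - σ • v := by simp [r]
  rw [hur] at hd
  simp only [sub_dotProduct, dotProduct_sub, dotProduct_neg, smul_dotProduct, dotProduct_smul,
    smul_eq_mul, dotProduct_comm r v, hrv] at hd
  nlinarith

lemma dotProduct_mulVec_nonneg_of_dotProduct_ne_zero {M : Matrix ι ι ℝ} (hv : v ≠ 0)
    (h : ∀ d, v ⬝ᵥ d ≠ 0 → 0 ≤ d ⬝ᵥ M *ᵥ d) (d : ι → ℝ) : 0 ≤ d ⬝ᵥ M *ᵥ d := by
  by_cases hd : v ⬝ᵥ d = 0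
  · have := nonneg_of_eventually_nonneg
      (f := fun s : ℝ => (d + s • v) ⬝ᵥ M *ᵥ (d + s • v)) (by fun_prop) ?_
    · simpa using this
    filter_upwards [self_mem_nhdsWithin] with s (hs : 0 < s)
    refine h _ ?_
    simp only [dotProduct_add, dotProduct_smul, smul_eq_mul, hd, zero_add]
    exact mul_ne_zero hs.ne' (dotProduct_self_pos hv).ne'
  · exact h d hd

end QuadraticModel

section TrustRegion

variable {ι : Type*} [Fintype ι] [DecidableEq ι] {A : Matrix ι ι ℝ} {a v d : ι → ℝ} {δ σ : ℝ}

def IsTrustRegionMultiplier (A : Matrix ι ι ℝ) (a v : ι → ℝ) (δ σ : ℝ) : Prop :=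
  0 ≤ σ ∧ (A + σ • 1) *ᵥ v + a = 0 ∧ σ * (v ⬝ᵥ v - δ ^ 2) = 0 ∧ (A + σ • 1).PosSemidef

lemma add_smul_one_mulVec (A : Matrix ι ι ℝ) (σ : ℝ) (x : ι → ℝ) :
    (A + σ • 1) *ᵥ x = A *ᵥ x + σ • x := by
  rw [add_mulVec, smul_mulVec, one_mulVec]

lemma quadraticModel_sub_quadraticModel (hA : A.IsSymm) (σ : ℝ) (a v w : ι → ℝ) :
    quadraticModel A a w - quadraticModel A a v =
      ((A + σ • 1) *ᵥ v + a) ⬝ᵥ (w - v) + 1 / 2 * ((w - v) ⬝ᵥ (A + σ • 1) *ᵥ (w - v))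
        + σ / 2 * (v ⬝ᵥ v - w ⬝ᵥ w) := by
  obtain ⟨h, rfl⟩ : ∃ h, w = v + h := ⟨w - v, by abel⟩
  rw [quadraticModel_add hA, add_sub_cancel_left]
  simp only [add_smul_one_mulVec, dotProduct_add, add_dotProduct, dotProduct_smul,
    smul_dotProduct, smul_eq_mul, dotProduct_comm h v]
  ring

lemma IsTrustRegionMultiplier.isMinOn (hA : A.IsSymm) (hσ : IsTrustRegionMultiplier A a v δ σ) :
    IsMinOn (quadraticModel A a) {w | w ⬝ᵥ w ≤ δ ^ 2} v := by
  obtain ⟨hσ0, hstat, hcomp, hpsd⟩ := hσ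
  refine isMinOn_iff.mpr fun w (hw : w ⬝ᵥ w ≤ δ ^ 2) => ?_
  have hid := quadraticModel_sub_quadraticModel hA σ a v w
  have hcurv : 0 ≤ (w - v) ⬝ᵥ (A + σ • 1) *ᵥ (w - v) := by
    simpa using hpsd.dotProduct_mulVec_nonneg (w - v)
  rw [hstat, zero_dotProduct] at hid
  nlinarith [mul_nonneg hσ0 (sub_nonneg.mpr hw)]

lemma IsTrustRegionMultiplier.unique (hδ : 0 < δ) {τ : ℝ}
    (hσ : IsTrustRegionMultiplier A a v δ σ) (hτ : IsTrustRegionMultiplier A a v δ τ) :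
    σ = τ := by
  by_cases hv : v = 0
  · have hzero : ∀ ρ, IsTrustRegionMultiplier A a v δ ρ → ρ = 0 := fun ρ hρ => by
      simpa [hv, hδ.ne'] using hρ.2.2.1
    rw [hzero σ hσ, hzero τ hτ]
  · refine smul_left_injective ℝ hv ?_
    have := hσ.2.1.trans hτ.2.1.symm
    simp only [add_smul_one_mulVec] at this
    simpa using this

lemma dotProduct_mulVec_nonneg_of_isMinOn (hA : A.IsSymm) {s : Set (ι → ℝ)}
    (hmin : IsMinOn (quadraticModel A a) s v) (hstat : (A + σ • 1) *ᵥ v + a = 0) {t : ℝ}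
    (ht : t ≠ 0) (hs : v + t • d ∈ s) (hσ : σ * ((v + t • d) ⬝ᵥ (v + t • d) - v ⬝ᵥ v) = 0) :
    0 ≤ d ⬝ᵥ (A + σ • 1) *ᵥ d := by
  have hid := quadraticModel_sub_quadraticModel hA σ a v (v + t • d)
  have hle := isMinOn_iff.mp hmin _ hs
  rw [hstat, zero_dotProduct, add_sub_cancel_left, mulVec_smul, dotProduct_smul,
    smul_dotProduct, smul_eq_mul, smul_eq_mul] at hid
  have : 0 ≤ t ^ 2 * (d ⬝ᵥ (A + σ • 1) *ᵥ d) := by nlinarith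
  exact nonneg_of_mul_nonneg_right this (by positivity)

lemma exists_isTrustRegionMultiplier_of_isMinOn_of_lt (hA : A.IsSymm) (hlt : v ⬝ᵥ v < δ ^ 2)
    (hmin : IsMinOn (quadraticModel A a) {w | w ⬝ᵥ w ≤ δ ^ 2} v) :
    IsTrustRegionMultiplier A a v δ 0 := by
  have hgrad : A *ᵥ v + a = 0 := by
    have := dotProduct_nonneg_of_isMinOn hA hmin
      (eventually_add_smul_mem_of_lt hlt (-(A *ᵥ v + a)))
    rw [dotProduct_neg, neg_nonneg] at this
    exact dotProduct_self_eq_zero.mp (le_antisymm this (dotProduct_self_nonneg _))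
  have hstat : (A + (0 : ℝ) • 1) *ᵥ v + a = 0 := by simpa using hgrad
  refine ⟨le_rfl, hstat, by ring, PosSemidef.of_dotProduct_mulVec_nonneg
    (isHermitian_iff_isSymm.mpr (hA.add (isSymm_one.smul 0))) fun d => ?_⟩
  obtain ⟨t, hs, ht⟩ := ((eventually_add_smul_mem_of_lt hlt d).and self_mem_nhdsWithin).exists
  simpa using dotProduct_mulVec_nonneg_of_isMinOn hA hmin hstat (Set.mem_Ioi.mp ht).ne' hs
    (zero_mul _)

lemma exists_isTrustRegionMultiplier_of_isMinOn_of_eq (hA : A.IsSymm) (hδ : 0 < δ)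
    (heq : v ⬝ᵥ v = δ ^ 2) (hmin : IsMinOn (quadraticModel A a) {w | w ⬝ᵥ w ≤ δ ^ 2} v) :
    ∃ σ, IsTrustRegionMultiplier A a v δ σ := by
  have hv0 : v ≠ 0 := by
    rintro rfl
    simp only [dotProduct_zero] at heq
    exact (pow_pos hδ 2).ne' heq.symm
  obtain ⟨σ, hσ0, hσ⟩ := exists_nonneg_add_smul_eq_zero hv0 fun d hd =>
    dotProduct_nonneg_of_isMinOn hA hmin (eventually_add_smul_mem_of_dotProduct_neg heq.le hd)
  have hstat : (A + σ • 1) *ᵥ v + a = 0 := by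
    rw [add_smul_one_mulVec, ← hσ]; abel
  refine ⟨σ, hσ0, hstat, by rw [heq, sub_self, mul_zero], PosSemidef.of_dotProduct_mulVec_nonneg
    (isHermitian_iff_isSymm.mpr (hA.add (isSymm_one.smul σ))) fun d => ?_⟩
  rw [star_trivial]
  refine dotProduct_mulVec_nonneg_of_dotProduct_ne_zero hv0 (fun d hd => ?_) d
  have hdd : d ⬝ᵥ d ≠ 0 := (dotProduct_self_pos (by rintro rfl; simp at hd)).ne'
  set t := -2 * (v ⬝ᵥ d) / (d ⬝ᵥ d) with ht
  have hsphere : (v + t • d) ⬝ᵥ (v + t • d) = v ⬝ᵥ v := by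
    rw [dotProduct_add_smul_self, ht]; field_simp; ring
  refine dotProduct_mulVec_nonneg_of_isMinOn hA hmin hstat (t := t) ?_ ?_ ?_
  · exact div_ne_zero (by simpa using hd) hdd
  · exact (hsphere.trans heq).le
  · rw [hsphere, sub_self, mul_zero]

theorem isMinOn_quadraticModel_iff (hA : A.IsSymm) (hδ : 0 < δ) (hv : v ⬝ᵥ v ≤ δ ^ 2) :
    IsMinOn (quadraticModel A a) {w | w ⬝ᵥ w ≤ δ ^ 2} v ↔
      ∃! σ, IsTrustRegionMultiplier A a v δ σ := by
  refine ⟨fun hmin => ?_, fun ⟨σ, hσ, _⟩ => hσ.isMinOn hA⟩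
  obtain ⟨σ, hσ⟩ : ∃ σ, IsTrustRegionMultiplier A a v δ σ := by
    rcases hv.lt_or_eq with hlt | heq
    · exact ⟨0, exists_isTrustRegionMultiplier_of_isMinOn_of_lt hA hlt hmin⟩
    · exact exists_isTrustRegionMultiplier_of_isMinOn_of_eq hA hδ heq hmin
  exact ⟨σ, hσ, fun τ hτ => hτ.unique hδ hσ⟩

end TrustRegion

lemma dotProduct_mul_mul_transpose_mulVec {ι κ : Type*} [Fintype ι] [Fintype κ]
    (U : Matrix ι κ ℝ) (M : Matrix κ κ ℝ) (x y : ι → ℝ) :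
    x ⬝ᵥ (U * M * Uᵀ) *ᵥ y = (Uᵀ *ᵥ x) ⬝ᵥ M *ᵥ (Uᵀ *ᵥ y) := by
  rw [← mulVec_mulVec, ← mulVec_mulVec, dotProduct_mulVec, ← mulVec_transpose]

section OrthogonalSplit

variable {ι κ μ : Type*} [Fintype ι] [Fintype κ] [Fintype μ]
  [DecidableEq ι] [DecidableEq κ] [DecidableEq μ]

structure IsOrthogonalSplit (U : Matrix ι κ ℝ) (V : Matrix ι μ ℝ) : Prop where
  transpose_mul_left : Uᵀ * U = 1
  transpose_mul_right : Vᵀ * V = 1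
  transpose_mul_cross : Uᵀ * V = 0
  mul_transpose_add : U * Uᵀ + V * Vᵀ = 1

namespace IsOrthogonalSplit

variable {U : Matrix ι κ ℝ} {V : Matrix ι μ ℝ}

lemma transpose_mul_cross' (h : IsOrthogonalSplit U V) : Vᵀ * U = 0 := by
  simpa using congrArg transpose h.transpose_mul_cross

lemma transpose_mulVec_left (h : IsOrthogonalSplit U V) (w₁ : κ → ℝ) (w₂ : μ → ℝ) :
    Uᵀ *ᵥ (U *ᵥ w₁ + V *ᵥ w₂) = w₁ := by
  simp [mulVec_add, mulVec_mulVec, h.transpose_mul_left, h.transpose_mul_cross]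

lemma transpose_mulVec_right (h : IsOrthogonalSplit U V) (w₁ : κ → ℝ) (w₂ : μ → ℝ) :
    Vᵀ *ᵥ (U *ᵥ w₁ + V *ᵥ w₂) = w₂ := by
  simp [mulVec_add, mulVec_mulVec, h.transpose_mul_right, h.transpose_mul_cross']

lemma eq_zero_iff (h : IsOrthogonalSplit U V) {x : ι → ℝ} :
    x = 0 ↔ Uᵀ *ᵥ x = 0 ∧ Vᵀ *ᵥ x = 0 := by
  refine ⟨by rintro rfl; simp, fun ⟨h₁, h₂⟩ => ?_⟩
  rw [← one_mulVec x, ← h.mul_transpose_add, add_mulVec, ← mulVec_mulVec, ← mulVec_mulVec,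
    h₁, h₂]
  simp

lemma transpose_mul_blockDiag_left (h : IsOrthogonalSplit U V) (A₁ : Matrix κ κ ℝ)
    (A₂ : Matrix μ μ ℝ) : Uᵀ * (U * A₁ * Uᵀ + V * A₂ * Vᵀ) = A₁ * Uᵀ := by
  simp only [Matrix.mul_add, ← Matrix.mul_assoc, h.transpose_mul_left, h.transpose_mul_cross,
    Matrix.one_mul, Matrix.zero_mul, add_zero]

lemma transpose_mul_blockDiag_right (h : IsOrthogonalSplit U V) (A₁ : Matrix κ κ ℝ)
    (A₂ : Matrix μ μ ℝ) : Vᵀ * (U * A₁ * Uᵀ + V * A₂ * Vᵀ) = A₂ * Vᵀ := by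
  simp only [Matrix.mul_add, ← Matrix.mul_assoc, h.transpose_mul_right, h.transpose_mul_cross',
    Matrix.one_mul, Matrix.zero_mul, zero_add]

lemma blockDiag_mulVec_add_eq_zero_iff (h : IsOrthogonalSplit U V) (A₁ : Matrix κ κ ℝ)
    (A₂ : Matrix μ μ ℝ) (p g : ι → ℝ) :
    (U * A₁ * Uᵀ + V * A₂ * Vᵀ) *ᵥ p + g = 0 ↔
      A₁ *ᵥ (Uᵀ *ᵥ p) + Uᵀ *ᵥ g = 0 ∧ A₂ *ᵥ (Vᵀ *ᵥ p) + Vᵀ *ᵥ g = 0 := by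
  rw [h.eq_zero_iff, mulVec_add, mulVec_add, mulVec_mulVec, mulVec_mulVec,
    h.transpose_mul_blockDiag_left, h.transpose_mul_blockDiag_right, ← mulVec_mulVec,
    ← mulVec_mulVec]

lemma posSemidef_blockDiag_iff (h : IsOrthogonalSplit U V) (A₁ : Matrix κ κ ℝ)
    (A₂ : Matrix μ μ ℝ) :
    (U * A₁ * Uᵀ + V * A₂ * Vᵀ).PosSemidef ↔ A₁.PosSemidef ∧ A₂.PosSemidef := by
  refine ⟨fun hM => ⟨?_, ?_⟩, fun ⟨h₁, h₂⟩ => ?_⟩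
  · have := hM.conjTranspose_mul_mul_same U
    rwa [conjTranspose_eq_transpose_of_trivial, h.transpose_mul_blockDiag_left, Matrix.mul_assoc,
      h.transpose_mul_left, Matrix.mul_one] at this
  · have := hM.conjTranspose_mul_mul_same V
    rwa [conjTranspose_eq_transpose_of_trivial, h.transpose_mul_blockDiag_right, Matrix.mul_assoc,
      h.transpose_mul_right, Matrix.mul_one] at this
  · simpa [conjTranspose_eq_transpose_of_trivial] using
      (h₁.mul_mul_conjTranspose_same U).add (h₂.mul_mul_conjTranspose_same V)

lemma dotProduct_eq (h : IsOrthogonalSplit U V) (x y : ι → ℝ) :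
    x ⬝ᵥ y = (Uᵀ *ᵥ x) ⬝ᵥ (Uᵀ *ᵥ y) + (Vᵀ *ᵥ x) ⬝ᵥ (Vᵀ *ᵥ y) := by
  calc x ⬝ᵥ y = x ⬝ᵥ (U * (1 : Matrix κ κ ℝ) * Uᵀ + V * (1 : Matrix μ μ ℝ) * Vᵀ) *ᵥ y := by
        rw [Matrix.mul_one, Matrix.mul_one, h.mul_transpose_add, one_mulVec]
    _ = _ := by
        rw [add_mulVec, dotProduct_add, dotProduct_mul_mul_transpose_mulVec,
          dotProduct_mul_mul_transpose_mulVec, one_mulVec, one_mulVec]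

lemma quadraticModel_blockDiag (h : IsOrthogonalSplit U V) (A₁ : Matrix κ κ ℝ)
    (A₂ : Matrix μ μ ℝ) (g p : ι → ℝ) :
    quadraticModel (U * A₁ * Uᵀ + V * A₂ * Vᵀ) g p =
      quadraticModel A₁ (Uᵀ *ᵥ g) (Uᵀ *ᵥ p) + quadraticModel A₂ (Vᵀ *ᵥ g) (Vᵀ *ᵥ p) := by
  simp only [quadraticModel, add_mulVec, dotProduct_add, dotProduct_mul_mul_transpose_mulVec,
    h.dotProduct_eq g p]
  ring

lemma smul_one_add_smul (h : IsOrthogonalSplit U V) (r s : ℝ) :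
    s • (1 : Matrix ι ι ℝ) + (r - s) • (U * Uᵀ) =
      U * (r • (1 : Matrix κ κ ℝ)) * Uᵀ + V * (s • (1 : Matrix μ μ ℝ)) * Vᵀ := by
  rw [← h.mul_transpose_add]
  simp only [Matrix.mul_smul, Matrix.smul_mul, Matrix.mul_one, smul_add, sub_smul]
  abel

lemma isMinOn_iff (h : IsOrthogonalSplit U V) {f : (ι → ℝ) → ℝ} {f₁ : (κ → ℝ) → ℝ}
    {f₂ : (μ → ℝ) → ℝ} (hf : ∀ p, f p = f₁ (Uᵀ *ᵥ p) + f₂ (Vᵀ *ᵥ p))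
    {s : Set (κ → ℝ)} {t : Set (μ → ℝ)} {x : ι → ℝ} (hs : Uᵀ *ᵥ x ∈ s) (ht : Vᵀ *ᵥ x ∈ t) :
    IsMinOn f {p | Uᵀ *ᵥ p ∈ s ∧ Vᵀ *ᵥ p ∈ t} x ↔
      IsMinOn f₁ s (Uᵀ *ᵥ x) ∧ IsMinOn f₂ t (Vᵀ *ᵥ x) := by
  simp only [_root_.isMinOn_iff, hf]
  refine ⟨fun hx => ⟨fun w hw => ?_, fun w hw => ?_⟩,
    fun ⟨h₁, h₂⟩ p ⟨hp₁, hp₂⟩ => add_le_add (h₁ _ hp₁) (h₂ _ hp₂)⟩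
  · have := hx (U *ᵥ w + V *ᵥ (Vᵀ *ᵥ x))
      ⟨by rwa [h.transpose_mulVec_left], by rwa [h.transpose_mulVec_right]⟩
    rwa [h.transpose_mulVec_left, h.transpose_mulVec_right, add_le_add_iff_right] at this
  · have := hx (U *ᵥ (Uᵀ *ᵥ x) + V *ᵥ w)
      ⟨by rwa [h.transpose_mulVec_left], by rwa [h.transpose_mulVec_right]⟩
    rwa [h.transpose_mulVec_left, h.transpose_mulVec_right, add_le_add_iff_left] at this

end IsOrthogonalSplit

end OrthogonalSplit

lemma norm2_le_iff {m : ℕ} {x : Fin m → ℝ} {δ : ℝ} (hδ : 0 ≤ δ) :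
    norm2 x ≤ δ ↔ x ⬝ᵥ x ≤ δ ^ 2 := by
  simp only [norm2, Real.sqrt_le_left hδ, dotProduct, sq]

lemma norm2_eq_iff {m : ℕ} {x : Fin m → ℝ} {δ : ℝ} (hδ : 0 ≤ δ) :
    norm2 x = δ ↔ x ⬝ᵥ x = δ ^ 2 := by
  rw [norm2, Real.sqrt_eq_iff_eq_sq (Finset.sum_nonneg fun i _ => sq_nonneg (x i)) hδ]
  simp only [dotProduct, sq]

lemma existsUnique_and_existsUnique_iff {α β : Type*} {p : α → Prop} {q : β → Prop} :
    ((∃! x, p x) ∧ ∃! y, q y) ↔ ∃! z : α × β, p z.1 ∧ q z.2 := by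
  constructor
  · rintro ⟨⟨x, hx, hx'⟩, ⟨y, hy, hy'⟩⟩
    exact ⟨(x, y), ⟨hx, hy⟩, fun z hz => Prod.ext (hx' _ hz.1) (hy' _ hz.2)⟩
  · rintro ⟨⟨x, y⟩, ⟨hx, hy⟩, h⟩
    exact ⟨⟨x, hx, fun x' hx' => congrArg Prod.fst (h (x', y) ⟨hx', hy⟩)⟩,
      ⟨y, hy, fun y' hy' => congrArg Prod.snd (h (x, y') ⟨hx, hy'⟩)⟩⟩

theorem global_solution_characterization_P2_general
    (n k : ℕ)
    (Ppar : Matrix (Fin n) (Fin (k + 1)) ℝ)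
    (Pperp : Matrix (Fin n) (Fin (n - (k + 1))) ℝ)
    (hpar : Pparᵀ * Ppar = 1) (hperp : Pperpᵀ * Pperp = 1)
    (hmix : Pparᵀ * Pperp = 0)
    (hfull : Ppar * Pparᵀ + Pperp * Pperpᵀ = 1)
    (lam : Fin (k + 1) → ℝ) (γ : ℝ)
    (B : Matrix (Fin n) (Fin n) ℝ)
    (hB : B = Ppar * Matrix.diagonal lam * Pparᵀ + γ • (Pperp * Pperpᵀ))
    (g : Fin n → ℝ) (δ : ℝ) (hδ : 0 < δ)
    (Q : (Fin n → ℝ) → ℝ)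
    (hQ : ∀ p, Q p = g ⬝ᵥ p + (1 / 2) * (p ⬝ᵥ B.mulVec p))
    (pstar : Fin n → ℝ)
    (h1 : norm2 (Pparᵀ.mulVec pstar) ≤ δ)
    (h2 : norm2 (Pperpᵀ.mulVec pstar) ≤ δ) :
    (∀ p : Fin n → ℝ,
        max (norm2 (Pparᵀ.mulVec p)) (norm2 (Pperpᵀ.mulVec p)) ≤ δ → Q pstar ≤ Q p)
    ↔ ∃! σ : ℝ × ℝ,
        0 ≤ σ.1 ∧ 0 ≤ σ.2 ∧
        (B + (σ.2 • (1 : Matrix (Fin n) (Fin n) ℝ)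
            + (σ.1 - σ.2) • (Ppar * Pparᵀ))).mulVec pstar + g = 0 ∧
        σ.1 * (norm2 (Pparᵀ.mulVec pstar) - δ) = 0 ∧
        σ.2 * (norm2 (Pperpᵀ.mulVec pstar) - δ) = 0 ∧
        (B + (σ.2 • (1 : Matrix (Fin n) (Fin n) ℝ)
            + (σ.1 - σ.2) • (Ppar * Pparᵀ))).PosSemidef := by
  have hP : IsOrthogonalSplit Ppar Pperp := ⟨hpar, hperp, hmix, hfull⟩
  set Γ : Matrix (Fin (n - (k + 1))) (Fin (n - (k + 1))) ℝ := γ • 1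
  have hB' : B = Ppar * diagonal lam * Pparᵀ + Pperp * Γ * Pperpᵀ := by simp [hB, Γ]
  have hBC (σ : ℝ × ℝ) : B + (σ.2 • 1 + (σ.1 - σ.2) • (Ppar * Pparᵀ)) =
      Ppar * (diagonal lam + σ.1 • 1) * Pparᵀ + Pperp * (Γ + σ.2 • 1) * Pperpᵀ := by
    rw [hB', hP.smul_one_add_smul]
    simp only [Matrix.mul_add, Matrix.add_mul]
    abel
  have hQ' (p : Fin n → ℝ) : Q p = quadraticModel (diagonal lam) (Pparᵀ *ᵥ g) (Pparᵀ *ᵥ p) +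
      quadraticModel Γ (Pperpᵀ *ᵥ g) (Pperpᵀ *ᵥ p) := by
    rw [hQ, ← hP.quadraticModel_blockDiag, ← hB', quadraticModel]
  have hv₁ := (norm2_le_iff hδ.le).mp h1
  have hv₂ := (norm2_le_iff hδ.le).mp h2
  have hmin : (∀ p : Fin n → ℝ,
        max (norm2 (Pparᵀ *ᵥ p)) (norm2 (Pperpᵀ *ᵥ p)) ≤ δ → Q pstar ≤ Q p) ↔
      (∃! σ₁, IsTrustRegionMultiplier (diagonal lam) (Pparᵀ *ᵥ g) (Pparᵀ *ᵥ pstar) δ σ₁) ∧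
      ∃! σ₂, IsTrustRegionMultiplier Γ (Pperpᵀ *ᵥ g) (Pperpᵀ *ᵥ pstar) δ σ₂ := by
    rw [← isMinOn_quadraticModel_iff (isSymm_diagonal lam) hδ hv₁,
      ← isMinOn_quadraticModel_iff (isSymm_one.smul γ) hδ hv₂, ← hP.isMinOn_iff hQ' hv₁ hv₂]
    simp only [_root_.isMinOn_iff, Set.mem_ofPred_eq, max_le_iff, norm2_le_iff hδ.le]
  rw [hmin, existsUnique_and_existsUnique_iff]
  refine existsUnique_congr fun σ => ?_
  rw [hBC, hP.blockDiag_mulVec_add_eq_zero_iff, hP.posSemidef_blockDiag_iff]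
  simp only [IsTrustRegionMultiplier, mul_eq_zero, sub_eq_zero, norm2_eq_iff hδ.le]
  tauto

/-- Let `P = [P_par P_perp]` be orthogonal, `B = P diag(Λ, γI) Pᵀ`,
`Q(p) = gᵀp + (1/2) pᵀ B p`, and `δ > 0`.  A vector `p*` with `‖P_parᵀ p*‖₂ ≤ δ` and
`‖P_perpᵀ p*‖₂ ≤ δ` is a global solution of `min Q(p)` s.t. `‖p‖_{P,2} ≤ δ` if and only
if there exist unique `σ_par ≥ 0` and `σ_perp ≥ 0` such that
`(B + C_par) p* + g = 0`, `σ_par (‖P_parᵀ p*‖₂ - δ) = 0`,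
`σ_perp (‖P_perpᵀ p*‖₂ - δ) = 0`, and `B + C_par` is positive semidefinite, where
`C_par = σ_perp I + (σ_par - σ_perp) P_par P_parᵀ`. -/
theorem global_solution_characterization_P2
    (n k : ℕ) (hkn : k + 1 < n)
    (Ppar : Matrix (Fin n) (Fin (k + 1)) ℝ)
    (Pperp : Matrix (Fin n) (Fin (n - (k + 1))) ℝ)
    (hpar : Pparᵀ * Ppar = 1) (hperp : Pperpᵀ * Pperp = 1)
    (hmix : Pparᵀ * Pperp = 0)
    (hfull : Ppar * Pparᵀ + Pperp * Pperpᵀ = 1)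
    (lam : Fin (k + 1) → ℝ) (hmono : Monotone lam) (γ : ℝ)
    (B : Matrix (Fin n) (Fin n) ℝ)
    (hB : B = Ppar * Matrix.diagonal lam * Pparᵀ + γ • (Pperp * Pperpᵀ))
    (g : Fin n → ℝ) (δ : ℝ) (hδ : 0 < δ)
    (Q : (Fin n → ℝ) → ℝ)
    (hQ : ∀ p, Q p = g ⬝ᵥ p + (1 / 2) * (p ⬝ᵥ B.mulVec p))
    (pstar : Fin n → ℝ)
    (h1 : norm2 (Pparᵀ.mulVec pstar) ≤ δ)
    (h2 : norm2 (Pperpᵀ.mulVec pstar) ≤ δ) :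
    (∀ p : Fin n → ℝ,
        max (norm2 (Pparᵀ.mulVec p)) (norm2 (Pperpᵀ.mulVec p)) ≤ δ → Q pstar ≤ Q p)
    ↔ ∃! σ : ℝ × ℝ,
        0 ≤ σ.1 ∧ 0 ≤ σ.2 ∧
        (B + (σ.2 • (1 : Matrix (Fin n) (Fin n) ℝ)
            + (σ.1 - σ.2) • (Ppar * Pparᵀ))).mulVec pstar + g = 0 ∧
        σ.1 * (norm2 (Pparᵀ.mulVec pstar) - δ) = 0 ∧
        σ.2 * (norm2 (Pperpᵀ.mulVec pstar) - δ) = 0 ∧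
        (B + (σ.2 • (1 : Matrix (Fin n) (Fin n) ℝ)
            + (σ.1 - σ.2) • (Ppar * Pparᵀ))).PosSemidef :=
  global_solution_characterization_P2_general n k Ppar Pperp hpar hperp hmix hfull lam γ B hB g δ hδ
    Q hQ pstar h1 h2
end

section
/- The infimum of Q(p) over the set {p ∈ ℝ^n : ‖p‖_{P,2} ≤ δ} equals the sum of the infimum of q_par(v_par) over {v_par ∈ ℝ^{k+1} : ‖v_par‖₂ ≤ δ} and the infimum of q_perp(v_perp) over {v_perp ∈ ℝ^{n−(k+1)} : ‖v_perp‖₂ ≤ δ}; moreover all three infima are attained. -/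
open Matrix

lemma norm2_nonneg {m : ℕ} (x : Fin m → ℝ) : 0 ≤ norm2 x := Real.sqrt_nonneg _

lemma norm2_sq {m : ℕ} (x : Fin m → ℝ) : (norm2 x) ^ 2 = ∑ i, x i ^ 2 := by
  rw [norm2, Real.sq_sqrt]; positivity

lemma norm2_sq_dot {m : ℕ} (x : Fin m → ℝ) : (norm2 x) ^ 2 = x ⬝ᵥ x := by
  rw [norm2_sq]; simp [dotProduct, sq]

lemma continuous_norm2 {m : ℕ} : Continuous (norm2 (m := m)) := by
  apply Real.continuous_sqrt.comp
  exact continuous_finset_sum _ fun i _ => (continuous_apply i).pow 2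

lemma ball_compact {m : ℕ} {δ : ℝ} (hδ : 0 ≤ δ) :
    IsCompact {v : Fin m → ℝ | norm2 v ≤ δ} := by
  rw [Metric.isCompact_iff_isClosed_bounded]
  constructor
  · exact isClosed_Iic.preimage continuous_norm2
  · apply Bornology.IsBounded.subset (Metric.isBounded_closedBall (x := (0 : Fin m → ℝ)) (r := δ))
    intro v hv
    simp only [Metric.mem_closedBall]
    rw [dist_pi_le_iff hδ]
    intro i
    have h1 : |v i| ≤ norm2 v := by
      rw [← Real.sqrt_sq_eq_abs, norm2]
      apply Real.sqrt_le_sqrt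
      exact Finset.single_le_sum (fun j _ => sq_nonneg (v j)) (Finset.mem_univ i)
    calc dist (v i) 0 = |v i| := by simp [Real.dist_eq]
    _ ≤ δ := h1.trans hv

lemma exists_min {m : ℕ} {δ : ℝ} (hδ : 0 ≤ δ) (f : (Fin m → ℝ) → ℝ)
    (hf : Continuous f) : ∃ x ∈ {v : Fin m → ℝ | norm2 v ≤ δ},
      IsLeast (f '' {v | norm2 v ≤ δ}) (f x) := by
  have hne : Set.Nonempty {v : Fin m → ℝ | norm2 v ≤ δ} :=
    ⟨0, by simp [Set.mem_setOf_eq, norm2]; positivity⟩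
  obtain ⟨x, hx, hmin⟩ := (ball_compact hδ).exists_isMinOn hne hf.continuousOn
  exact ⟨x, hx, ⟨⟨x, hx, rfl⟩, by rintro y ⟨z, hz, rfl⟩; exact hmin hz⟩⟩

lemma dot_trans {n m : ℕ} (A : Matrix (Fin n) (Fin m) ℝ) (x : Fin n → ℝ) (z : Fin m → ℝ) :
    x ⬝ᵥ (A.mulVec z) = (Aᵀ.mulVec x) ⬝ᵥ z := by
  rw [Matrix.dotProduct_mulVec, Matrix.mulVec_transpose]

/-- The minimum of `Q(p)` over `{p : ‖p‖_{P,2} ≤ δ}` equals the sum of the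
minimum of `q_par` over the ball `{v_par : ‖v_par‖₂ ≤ δ}` and the minimum of `q_perp` over
the ball `{v_perp : ‖v_perp‖₂ ≤ δ}`; moreover all three infima are attained
(expressed here via `IsLeast`). -/
theorem decoupled_infima
    (n k : ℕ) (hkn : k + 1 < n)
    (Ppar : Matrix (Fin n) (Fin (k + 1)) ℝ)
    (Pperp : Matrix (Fin n) (Fin (n - (k + 1))) ℝ)
    (hpar : Pparᵀ * Ppar = 1) (hperp : Pperpᵀ * Pperp = 1)
    (hmix : Pparᵀ * Pperp = 0)
    (hfull : Ppar * Pparᵀ + Pperp * Pperpᵀ = 1)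
    (lam : Fin (k + 1) → ℝ) (γ : ℝ)
    (B : Matrix (Fin n) (Fin n) ℝ)
    (hB : B = Ppar * Matrix.diagonal lam * Pparᵀ + γ • (Pperp * Pperpᵀ))
    (g : Fin n → ℝ) (gpar : Fin (k + 1) → ℝ) (gperp : Fin (n - (k + 1)) → ℝ)
    (hgpar : gpar = Pparᵀ.mulVec g) (hgperp : gperp = Pperpᵀ.mulVec g)
    (δ : ℝ) (hδ : 0 < δ)
    (Q : (Fin n → ℝ) → ℝ)
    (hQ : ∀ p, Q p = g ⬝ᵥ p + (1 / 2) * (p ⬝ᵥ B.mulVec p))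
    (qpar : (Fin (k + 1) → ℝ) → ℝ)
    (hqpar : ∀ v, qpar v = gpar ⬝ᵥ v + (1 / 2) * (v ⬝ᵥ (Matrix.diagonal lam).mulVec v))
    (qperp : (Fin (n - (k + 1)) → ℝ) → ℝ)
    (hqperp : ∀ v, qperp v = gperp ⬝ᵥ v + (γ / 2) * (norm2 v) ^ 2) :
    ∃ a b : ℝ,
      IsLeast (qpar '' {v | norm2 v ≤ δ}) a ∧
      IsLeast (qperp '' {v | norm2 v ≤ δ}) b ∧
      IsLeast (Q '' {p | max (norm2 (Pparᵀ.mulVec p)) (norm2 (Pperpᵀ.mulVec p)) ≤ δ})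
        (a + b) := by
  -- continuity of qpar and qperp
  have hcpar : Continuous qpar := by
    have : qpar = fun v => gpar ⬝ᵥ v + (1 / 2) * (v ⬝ᵥ (Matrix.diagonal lam).mulVec v) :=
      funext hqpar
    rw [this]
    apply Continuous.add
    · exact continuous_finset_sum _ fun i _ => (continuous_const.mul (continuous_apply i))
    · apply continuous_const.mul
      apply continuous_finset_sum _ fun i _ => ?_
      simp only [Matrix.mulVec_diagonal]
      exact (continuous_apply i).mul (continuous_const.mul (continuous_apply i))
  have hcperp : Continuous qperp := by
    have : qperp = fun v => gperp ⬝ᵥ v + (γ / 2) * ∑ i, v i ^ 2 := by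
      funext v; rw [hqperp, norm2_sq]
    rw [this]
    apply Continuous.add
    · exact continuous_finset_sum _ fun i _ => (continuous_const.mul (continuous_apply i))
    · exact continuous_const.mul
        (continuous_finset_sum _ fun i _ => (continuous_apply i).pow 2)
  obtain ⟨u0, hu0, hupar⟩ := exists_min hδ.le qpar hcpar
  obtain ⟨w0, hw0, hwperp⟩ := exists_min hδ.le qperp hcperp
  refine ⟨qpar u0, qperp w0, hupar, hwperp, ?_⟩
  have hmix' : Pperpᵀ * Ppar = 0 := by
    have := congrArg Matrix.transpose hmix
    simpa [Matrix.transpose_mul] using this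
  -- key decoupling identity
  have key : ∀ p : Fin n → ℝ,
      Q p = qpar (Pparᵀ.mulVec p) + qperp (Pperpᵀ.mulVec p) := by
    intro p
    rw [hQ, hqpar, hqperp]
    have h1 : g ⬝ᵥ p = gpar ⬝ᵥ (Pparᵀ.mulVec p) + gperp ⬝ᵥ (Pperpᵀ.mulVec p) := by
      rw [hgpar, hgperp, ← dot_trans, ← dot_trans, ← dotProduct_add,
        Matrix.mulVec_mulVec, Matrix.mulVec_mulVec, ← Matrix.add_mulVec, hfull,
        Matrix.one_mulVec]
    have h2 : p ⬝ᵥ B.mulVec p =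
        (Pparᵀ.mulVec p) ⬝ᵥ (Matrix.diagonal lam).mulVec (Pparᵀ.mulVec p)
          + γ * ((Pperpᵀ.mulVec p) ⬝ᵥ (Pperpᵀ.mulVec p)) := by
      rw [hB, Matrix.add_mulVec, dotProduct_add]
      congr 1
      · rw [← Matrix.mulVec_mulVec, ← Matrix.mulVec_mulVec, dot_trans]
      · rw [Matrix.smul_mulVec, dotProduct_smul, ← Matrix.mulVec_mulVec, dot_trans]
        simp [smul_eq_mul]
    rw [h1, h2, norm2_sq_dot]
    ring
  have hrec_par : ∀ (u : Fin (k + 1) → ℝ) (w : Fin (n - (k + 1)) → ℝ),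
      Pparᵀ.mulVec (Ppar.mulVec u + Pperp.mulVec w) = u := by
    intro u w
    rw [Matrix.mulVec_add, Matrix.mulVec_mulVec, Matrix.mulVec_mulVec, hpar, hmix,
      Matrix.one_mulVec, Matrix.zero_mulVec, add_zero]
  have hrec_perp : ∀ (u : Fin (k + 1) → ℝ) (w : Fin (n - (k + 1)) → ℝ),
      Pperpᵀ.mulVec (Ppar.mulVec u + Pperp.mulVec w) = w := by
    intro u w
    rw [Matrix.mulVec_add, Matrix.mulVec_mulVec, Matrix.mulVec_mulVec, hperp, hmix',
      Matrix.one_mulVec, Matrix.zero_mulVec, zero_add]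
  constructor
  · -- membership
    refine ⟨Ppar.mulVec u0 + Pperp.mulVec w0, ?_, ?_⟩
    · simp only [Set.mem_setOf_eq, hrec_par, hrec_perp]
      exact max_le hu0 hw0
    · rw [key, hrec_par, hrec_perp]
  · -- lower bound
    rintro y ⟨p, hp, rfl⟩
    simp only [Set.mem_setOf_eq, max_le_iff] at hp
    rw [key]
    exact add_le_add (hupar.2 ⟨_, hp.1, rfl⟩) (hwperp.2 ⟨_, hp.2, rfl⟩)
end

section
/- If g_perp ≠ 0 and either γ ≤ 0 or ‖g_perp‖₂ > δ γ, then v* = −(δ/‖g_perp‖₂) g_perp is a global minimizer of q_perp(v) = g_perp^T v + (γ/2)‖v‖₂² over the ball {v ∈ ℝ^m : ‖v‖₂ ≤ δ}. -/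
open Matrix

/-- If `g_perp ≠ 0` and either `γ ≤ 0` or `‖g_perp‖₂ > δ γ`, then
`v* = -(δ/‖g_perp‖₂) g_perp` is a global minimizer of
`q_perp(v) = g_perpᵀ v + (γ/2) ‖v‖₂²` over `{v : ‖v‖₂ ≤ δ}`. -/
theorem qperp_minimizer_boundary
    (m : ℕ) (hm : 1 ≤ m) (γ : ℝ) (gperp : Fin m → ℝ) (δ : ℝ) (hδ : 0 < δ)
    (qperp : (Fin m → ℝ) → ℝ)
    (hq : ∀ v, qperp v = gperp ⬝ᵥ v + (γ / 2) * (norm2 v) ^ 2)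
    (hg : gperp ≠ 0) (hcase : γ ≤ 0 ∨ δ * γ < norm2 gperp) :
    norm2 ((-(δ / norm2 gperp)) • gperp) ≤ δ ∧
      ∀ v : Fin m → ℝ, norm2 v ≤ δ →
        qperp ((-(δ / norm2 gperp)) • gperp) ≤ qperp v := by
  have hsum : 0 < ∑ i, gperp i ^ 2 := by
    obtain ⟨i, hi⟩ : ∃ i, gperp i ≠ 0 := by
      by_contra h; push_neg at h; exact hg (funext h)
    exact Finset.sum_pos' (fun j _ => sq_nonneg _)
      ⟨i, Finset.mem_univ i, by positivity⟩
  have hnpos : 0 < norm2 gperp := Real.sqrt_pos.mpr hsum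
  set n := norm2 gperp with hn
  have hn2 : n ^ 2 = ∑ i, gperp i ^ 2 := Real.sq_sqrt hsum.le
  have hnormv : norm2 ((-(δ / n)) • gperp) = δ := by
    have hc : ∀ i, ((-(δ / n)) • gperp) i ^ 2 = (δ / n) ^ 2 * gperp i ^ 2 := by
      intro i; simp only [Pi.smul_apply, smul_eq_mul]; ring
    unfold norm2
    rw [Finset.sum_congr rfl (fun i _ => hc i), ← Finset.mul_sum,
      Real.sqrt_mul (sq_nonneg _), Real.sqrt_sq (by positivity)]
    rw [show Real.sqrt (∑ i, gperp i ^ 2) = n from rfl]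
    field_simp
  refine ⟨hnormv.le, fun v hv => ?_⟩
  have htnn : 0 ≤ norm2 v := Real.sqrt_nonneg _
  have ht2 : norm2 v ^ 2 = ∑ i, v i ^ 2 :=
    Real.sq_sqrt (Finset.sum_nonneg fun i _ => sq_nonneg _)
  have hdotstar : gperp ⬝ᵥ ((-(δ / n)) • gperp) = -(δ * n) := by
    simp only [dotProduct, Pi.smul_apply, smul_eq_mul]
    have h1 : ∑ i, gperp i * (-(δ / n) * gperp i)
        = (-(δ / n)) * ∑ i, gperp i ^ 2 := by
      rw [Finset.mul_sum]; exact Finset.sum_congr rfl fun i _ => by ring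
    rw [h1, ← hn2]
    field_simp
  have hCS : -(n * norm2 v) ≤ gperp ⬝ᵥ v := by
    have h1 : (gperp ⬝ᵥ v) ^ 2 ≤ (∑ i, gperp i ^ 2) * (∑ i, v i ^ 2) := by
      simpa [dotProduct] using
        Finset.sum_mul_sq_le_sq_mul_sq Finset.univ gperp v
    have h2 : |gperp ⬝ᵥ v| ≤ n * norm2 v := by
      have := Real.sqrt_le_sqrt h1
      rw [Real.sqrt_sq_eq_abs, ← hn2, ← ht2,
        Real.sqrt_mul (sq_nonneg _), Real.sqrt_sq hnpos.le,
        Real.sqrt_sq htnn] at this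
      exact this
    linarith [neg_abs_le (gperp ⬝ᵥ v)]
  have hkey : γ * (δ + norm2 v) ≤ 2 * n := by
    rcases le_or_gt γ 0 with h | h
    · nlinarith
    · have h2 := hcase.resolve_left (not_le.mpr h)
      nlinarith
  rw [hq, hq, hdotstar, hnormv]
  nlinarith [mul_nonneg (sub_nonneg.mpr hv)
    (sub_nonneg.mpr hkey)]
end

section
/- Suppose λ_1 = 0 with multiplicity r (i.e., λ_1 = ⋯ = λ_r = 0 < λ_{r+1}), that [g_par]_i = 0 for 1 ≤ i ≤ r, and that ‖Λ^† g_par‖₂ ≤ δ, where Λ^† denotes the Moore–Penrose pseudoinverse of Λ. Then v* = −Λ^† g_par is a global minimizer of q_par(v) = g_par^T v + (1/2) v^T Λ v over the ball {v ∈ ℝ^{k+1} : ‖v‖₂ ≤ δ}. -/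
open Matrix

/-- The Moore–Penrose pseudoinverse of the diagonal matrix `diag d`. -/
noncomputable def diagPinv {m : ℕ} (d : Fin m → ℝ) : Matrix (Fin m) (Fin m) ℝ :=
  Matrix.diagonal (fun i => if d i = 0 then 0 else (d i)⁻¹)

/-!
If `A` is positive semidefinite and `A w = -g`, then expanding `q(v) = gᵀv + ½ vᵀAv` around `w`
gives `q(v) = q(w) + ½ (v - w)ᵀA(v - w) ≥ q(w)`, so `w` is a global minimizer of `q`, in
particular on every ball containing it. For `A = Λ = diag λ` with `λ ≥ 0` and `g` vanishing
wherever `λ` does, `w = -Λ† g` solves `Λ w = -g`; monotonicity of `λ` and `λ_{r+1} > 0` give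
`λ ≥ 0`.
-/

theorem norm2_neg {m : ℕ} (x : Fin m → ℝ) : norm2 (-x) = norm2 x := by
  simp only [norm2, Pi.neg_apply, neg_sq]

theorem Matrix.IsSymm.quadratic_eq_of_mulVec_eq_neg {n : Type*} [Fintype n]
    {A : Matrix n n ℝ} (hA : A.IsSymm) {g w : n → ℝ} (hw : A *ᵥ w = -g) (v : n → ℝ) :
    g ⬝ᵥ v + 1 / 2 * (v ⬝ᵥ A *ᵥ v) =
      g ⬝ᵥ w + 1 / 2 * (w ⬝ᵥ A *ᵥ w) + 1 / 2 * ((v - w) ⬝ᵥ A *ᵥ (v - w)) := by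
  have hcross : w ⬝ᵥ A *ᵥ (v - w) = -(g ⬝ᵥ (v - w)) := by
    rw [dotProduct_mulVec, ← mulVec_transpose, hA.eq, hw, neg_dotProduct]
  obtain ⟨d, rfl⟩ : ∃ d, v = w + d := ⟨v - w, by abel⟩
  simp only [add_sub_cancel_left, mulVec_add, dotProduct_add, add_dotProduct] at hcross ⊢
  rw [hcross, hw, dotProduct_neg d g, dotProduct_comm d g]
  ring

theorem Matrix.PosSemidef.quadratic_le_of_mulVec_eq_neg {n : Type*} [Fintype n]
    {A : Matrix n n ℝ} (hA : A.PosSemidef) {g w : n → ℝ} (hw : A *ᵥ w = -g) (v : n → ℝ) :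
    g ⬝ᵥ w + 1 / 2 * (w ⬝ᵥ A *ᵥ w) ≤ g ⬝ᵥ v + 1 / 2 * (v ⬝ᵥ A *ᵥ v) := by
  rw [(isHermitian_iff_isSymm.mp hA.isHermitian).quadratic_eq_of_mulVec_eq_neg hw v]
  have hcurv : 0 ≤ (v - w) ⬝ᵥ A *ᵥ (v - w) := by
    simpa only [star_trivial] using hA.dotProduct_mulVec_nonneg (v - w)
  linarith

theorem diagonal_mulVec_diagPinv_mulVec {m : ℕ} {d g : Fin m → ℝ}
    (hg : ∀ i, d i = 0 → g i = 0) : diagonal d *ᵥ (diagPinv d *ᵥ g) = g := by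
  ext i
  rw [diagPinv, mulVec_mulVec, diagonal_mul_diagonal, mulVec_diagonal]
  by_cases hd : d i = 0
  · simp [hd, hg i hd]
  · simp [hd]

theorem qpar_minimizer_singular_general
    (k : ℕ) (lam : Fin (k + 1) → ℝ) (hmono : Monotone lam)
    (gpar : Fin (k + 1) → ℝ) (δ : ℝ)
    (qpar : (Fin (k + 1) → ℝ) → ℝ)
    (hq : ∀ v, qpar v = gpar ⬝ᵥ v + (1 / 2) * (v ⬝ᵥ (Matrix.diagonal lam).mulVec v))
    (r : ℕ) (hr2 : r < k + 1)
    (hzero : ∀ i : Fin (k + 1), (i : ℕ) < r → lam i = 0)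
    (hpos : 0 < lam ⟨r, hr2⟩)
    (hgzero : ∀ i : Fin (k + 1), (i : ℕ) < r → gpar i = 0)
    (hnorm : norm2 ((diagPinv lam).mulVec gpar) ≤ δ) :
    norm2 (-(diagPinv lam).mulVec gpar) ≤ δ ∧
      ∀ v : Fin (k + 1) → ℝ, norm2 v ≤ δ →
        qpar (-(diagPinv lam).mulVec gpar) ≤ qpar v := by
  have hsplit : ∀ i : Fin (k + 1), (i : ℕ) < r ∨ 0 < lam i := fun i =>
    (lt_or_ge (i : ℕ) r).imp_right fun h => hpos.trans_le (hmono (Fin.le_def.mpr h))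
  have hnonneg : 0 ≤ lam := fun i => (hsplit i).elim (fun h => (hzero i h).ge) le_of_lt
  have hvanish : ∀ i, lam i = 0 → gpar i = 0 := fun i h0 =>
    (hsplit i).elim (hgzero i) fun h => absurd h0 h.ne'
  refine ⟨by rwa [norm2_neg], fun v _ => ?_⟩
  rw [hq, hq]
  refine (PosSemidef.diagonal hnonneg).quadratic_le_of_mulVec_eq_neg ?_ v
  rw [mulVec_neg, diagonal_mulVec_diagPinv_mulVec hvanish]

/-- Suppose `Λ = diag(λ₁,…,λ_{k+1})` with `λ₁ ≤ … ≤ λ_{k+1}`,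
`λ₁ = ⋯ = λ_r = 0 < λ_{r+1}` (indices `1,…,k+1`; here 0-based), `[g_par]_i = 0` for
`1 ≤ i ≤ r`, and `‖Λ† g_par‖₂ ≤ δ`.  Then `v* = -Λ† g_par` is a global minimizer of
`q_par(v) = g_parᵀ v + (1/2) vᵀ Λ v` over `{v : ‖v‖₂ ≤ δ}`. -/
theorem qpar_minimizer_singular
    (k : ℕ) (lam : Fin (k + 1) → ℝ) (hmono : Monotone lam)
    (gpar : Fin (k + 1) → ℝ) (δ : ℝ) (hδ : 0 < δ)
    (qpar : (Fin (k + 1) → ℝ) → ℝ)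
    (hq : ∀ v, qpar v = gpar ⬝ᵥ v + (1 / 2) * (v ⬝ᵥ (Matrix.diagonal lam).mulVec v))
    (r : ℕ) (hr1 : 1 ≤ r) (hr2 : r < k + 1)
    (hzero : ∀ i : Fin (k + 1), (i : ℕ) < r → lam i = 0)
    (hpos : 0 < lam ⟨r, hr2⟩)
    (hgzero : ∀ i : Fin (k + 1), (i : ℕ) < r → gpar i = 0)
    (hnorm : norm2 ((diagPinv lam).mulVec gpar) ≤ δ) :
    norm2 (-(diagPinv lam).mulVec gpar) ≤ δ ∧
      ∀ v : Fin (k + 1) → ℝ, norm2 v ≤ δ →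
        qpar (-(diagPinv lam).mulVec gpar) ≤ qpar v :=
  qpar_minimizer_singular_general k lam hmono gpar δ qpar hq r hr2 hzero hpos hgzero hnorm
end

section
/- The function φ(σ) = (Σ_{i=1}^{ℓ} ā_i²/(λ̄_i + σ)²)^{−1/2} − 1/δ is strictly increasing and concave on the open interval (−λ̄_1, ∞). -/
/-!
Write `Sₖ(σ) = ∑ᵢ aᵢ² / (λᵢ + σ)ᵏ`, so that `Sₖ' = -k Sₖ₊₁` and `φ = S₂^{-1/2} - 1/δ`. Then
`φ' = S₃ / S₂^{3/2} > 0` and `φ'' = 3 (S₃² - S₂ S₄) / S₂^{5/2} ≤ 0`, the last sign being the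
Cauchy–Schwarz inequality for the vectors `(aᵢ / (λᵢ + σ))ᵢ` and `(aᵢ / (λᵢ + σ)²)ᵢ`.
-/

open Set

section SecularSum

variable {ι : Type*} [Fintype ι] (a lb : ι → ℝ)

noncomputable def secularSum (k : ℕ) (σ : ℝ) : ℝ :=
  ∑ i, a i ^ 2 / (lb i + σ) ^ k

lemma hasDerivAt_secularSum (k : ℕ) {σ : ℝ} (hσ : ∀ i, lb i + σ ≠ 0) :
    HasDerivAt (secularSum a lb k) (-k * secularSum a lb (k + 1) σ) σ := by
  rw [secularSum, Finset.mul_sum]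
  refine HasDerivAt.fun_sum fun i _ => ?_
  have hpow := (((hasDerivAt_id σ).const_add (lb i)).fun_pow k)
  refine ((hasDerivAt_const σ (a i ^ 2)).fun_div hpow (pow_ne_zero k (hσ i))).congr_deriv ?_
  have := hσ i
  rcases k with _ | k
  · simp
  · simp only [id, Nat.add_sub_cancel]
    field_simp
    push_cast
    ring

lemma secularSum_pos (k : ℕ) {σ : ℝ} (ha : ∃ i, a i ≠ 0) (hσ : ∀ i, 0 < lb i + σ) :
    0 < secularSum a lb k σ := by
  obtain ⟨j, hj⟩ := ha
  exact Finset.sum_pos' (fun i _ => by have := hσ i; positivity)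
    ⟨j, Finset.mem_univ j, by have := hσ j; positivity⟩

lemma secularSum_three_sq_le (σ : ℝ) :
    secularSum a lb 3 σ ^ 2 ≤ secularSum a lb 2 σ * secularSum a lb 4 σ := by
  have hCS := Finset.sum_mul_sq_le_sq_mul_sq Finset.univ
    (fun i => a i / (lb i + σ)) (fun i => a i / (lb i + σ) ^ 2)
  have hterm : ∀ i, ∀ m n : ℕ, (a i / (lb i + σ) ^ m) * (a i / (lb i + σ) ^ n) =
      a i ^ 2 / (lb i + σ) ^ (m + n) := fun i m n => by
    rw [div_mul_div_comm, ← sq, pow_add]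
  simpa only [secularSum, ← hterm _ 1 2, ← hterm _ 1 1, ← hterm _ 2 2, pow_one, ← sq] using hCS

variable {a lb}

lemma hasDerivAt_inv_sqrt_secularSum {σ : ℝ} (hσ : ∀ i, lb i + σ ≠ 0)
    (hS : 0 < secularSum a lb 2 σ) :
    HasDerivAt (fun σ => 1 / √(secularSum a lb 2 σ))
      (secularSum a lb 3 σ / (secularSum a lb 2 σ * √(secularSum a lb 2 σ))) σ := by
  have hs : 0 < √(secularSum a lb 2 σ) := Real.sqrt_pos.mpr hS
  have hsqrt := (hasDerivAt_secularSum a lb 2 hσ).sqrt hS.ne'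
  simp only [one_div]
  refine (hsqrt.inv hs.ne').congr_deriv ?_
  rw [Real.sq_sqrt hS.le]
  field_simp
  ring

lemma hasDerivAt_secularSum_three_div {σ : ℝ} (hσ : ∀ i, lb i + σ ≠ 0)
    (hS : 0 < secularSum a lb 2 σ) :
    HasDerivAt (fun σ => secularSum a lb 3 σ / (secularSum a lb 2 σ * √(secularSum a lb 2 σ)))
      (3 * (secularSum a lb 3 σ ^ 2 - secularSum a lb 2 σ * secularSum a lb 4 σ) /
        (secularSum a lb 2 σ ^ 2 * √(secularSum a lb 2 σ))) σ := by
  have hs : 0 < √(secularSum a lb 2 σ) := Real.sqrt_pos.mpr hS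
  have h2 := hasDerivAt_secularSum a lb 2 hσ
  have hden := h2.fun_mul (h2.sqrt hS.ne')
  refine ((hasDerivAt_secularSum a lb 3 hσ).fun_div hden
    (mul_ne_zero hS.ne' hs.ne')).congr_deriv ?_
  set s := √(secularSum a lb 2 σ)
  rw [← Real.sq_sqrt hS.le]
  norm_num
  field_simp
  ring

variable {c : ℝ}

lemma strictMonoOn_inv_sqrt_secularSum (hc : ∀ i, c ≤ lb i) (ha : ∃ i, a i ≠ 0) :
    StrictMonoOn (fun σ => 1 / √(secularSum a lb 2 σ)) (Ioi (-c)) := by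
  have hpos σ (hσ : σ ∈ Ioi (-c)) i : 0 < lb i + σ := by linarith [hc i, mem_Ioi.mp hσ]
  have hderiv σ (hσ : σ ∈ Ioi (-c)) := hasDerivAt_inv_sqrt_secularSum
    (fun i => (hpos σ hσ i).ne') (secularSum_pos a lb 2 ha (hpos σ hσ))
  apply strictMonoOn_of_hasDerivWithinAt_pos (convex_Ioi _)
    (fun σ hσ => (hderiv σ hσ).continuousAt.continuousWithinAt)
  · intro σ hσ
    rw [interior_Ioi] at hσ ⊢
    exact (hderiv σ hσ).hasDerivWithinAt
  · intro σ hσ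
    rw [interior_Ioi] at hσ
    have h2 := secularSum_pos a lb 2 ha (hpos σ hσ)
    have h3 := secularSum_pos a lb 3 ha (hpos σ hσ)
    positivity

lemma concaveOn_inv_sqrt_secularSum (hc : ∀ i, c ≤ lb i) (ha : ∃ i, a i ≠ 0) :
    ConcaveOn ℝ (Ioi (-c)) (fun σ => 1 / √(secularSum a lb 2 σ)) := by
  have hpos σ (hσ : σ ∈ Ioi (-c)) i : 0 < lb i + σ := by linarith [hc i, mem_Ioi.mp hσ]
  have hS σ (hσ : σ ∈ Ioi (-c)) := secularSum_pos a lb 2 ha (hpos σ hσ)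
  have hne σ (hσ : σ ∈ Ioi (-c)) i := (hpos σ hσ i).ne'
  have hderiv σ (hσ : σ ∈ Ioi (-c)) := hasDerivAt_inv_sqrt_secularSum (hne σ hσ) (hS σ hσ)
  apply concaveOn_of_hasDerivWithinAt2_nonpos (convex_Ioi _)
    (fun σ hσ => (hderiv σ hσ).continuousAt.continuousWithinAt)
  · intro σ hσ
    rw [interior_Ioi] at hσ ⊢
    exact (hderiv σ hσ).hasDerivWithinAt
  · intro σ hσ
    rw [interior_Ioi] at hσ ⊢
    exact (hasDerivAt_secularSum_three_div (hne σ hσ) (hS σ hσ)).hasDerivWithinAt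
  · intro σ hσ
    rw [interior_Ioi] at hσ
    have hCS := secularSum_three_sq_le a lb σ
    have := hS σ hσ
    exact div_nonpos_of_nonpos_of_nonneg (by linarith) (by positivity)

end SecularSum

theorem secular_function_strictMono_concave_general
    (l : ℕ) (lb : Fin (l + 1) → ℝ) (hlb : StrictMono lb)
    (a : Fin (l + 1) → ℝ) (ha : ∀ i, a i ≠ 0) (δ : ℝ)
    (φ : ℝ → ℝ)
    (hφ : ∀ σ, φ σ = 1 / Real.sqrt (∑ i, a i ^ 2 / (lb i + σ) ^ 2) - 1 / δ) :
    StrictMonoOn φ (Set.Ioi (-lb 0)) ∧ ConcaveOn ℝ (Set.Ioi (-lb 0)) φ := by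
  have hc : ∀ i, lb 0 ≤ lb i := fun i => hlb.monotone (Fin.zero_le i)
  have ha' : ∃ i, a i ≠ 0 := ⟨0, ha 0⟩
  obtain rfl : φ = fun σ => 1 / √(secularSum a lb 2 σ) + -(1 / δ) := by
    funext σ
    rw [hφ, sub_eq_add_neg, secularSum]
  exact ⟨(strictMonoOn_inv_sqrt_secularSum hc ha').add_const _,
    (concaveOn_inv_sqrt_secularSum hc ha').add_const _⟩

/-- Let `λ̄₁ < ⋯ < λ̄_ℓ` (here `ℓ = l + 1 ≥ 1`), let `ā₁,…,ā_ℓ` be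
nonzero reals, and `δ > 0`.  Then the secular function
`φ(σ) = (∑ᵢ āᵢ²/(λ̄ᵢ + σ)²)^{-1/2} - 1/δ` is strictly increasing and concave on the
open interval `(-λ̄₁, ∞)`. -/
theorem secular_function_strictMono_concave
    (l : ℕ) (lb : Fin (l + 1) → ℝ) (hlb : StrictMono lb)
    (a : Fin (l + 1) → ℝ) (ha : ∀ i, a i ≠ 0) (δ : ℝ) (hδ : 0 < δ)
    (φ : ℝ → ℝ)
    (hφ : ∀ σ, φ σ = 1 / Real.sqrt (∑ i, a i ^ 2 / (lb i + σ) ^ 2) - 1 / δ) :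
    StrictMonoOn φ (Set.Ioi (-lb 0)) ∧ ConcaveOn ℝ (Set.Ioi (-lb 0)) φ :=
  secular_function_strictMono_concave_general l lb hlb a ha δ φ hφ
end
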